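/- arXiv:0806.2357 — 12 statements merged into one kernel-verified Lean document; each statement's English description precedes it below -/
import Mathlib

section
/- The map C_u from functions on Fin n × Fin n to n×n complex matrices is a unitary isomorphism: it is a complex-linear bijection, and for all f, g : Fin n × Fin n → ℂ, ⟨C_u f, C_u g⟩_HS = ⟨f, g⟩_u. -/
open Finset Matrix

/-- The symbol-to-operator map `C_u`. -/
noncomputable def Cmap {ι : Type*} [Fintype ι] (u : Matrix ι ι ℂ) (f : ι × ι → ℂ) :
    Matrix ι ι ℂ :=
  fun k k' => ∑ l, u k l * f (k, l) * (starRingEnd ℂ) (u k' l)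

/-- The Hermitian product `⟨f,g⟩_u` on functions on `ι × ι`. -/
noncomputable def innerU {ι : Type*} [Fintype ι] (u : Matrix ι ι ℂ) (f g : ι × ι → ℂ) : ℂ :=
  ∑ k, ∑ l, f (k, l) * (starRingEnd ℂ) (g (k, l)) * ((‖u k l‖) ^ 2 : ℝ)

/-- The Hilbert–Schmidt Hermitian product on matrices. -/
noncomputable def innerHS {ι : Type*} [Fintype ι] (X Y : Matrix ι ι ℂ) : ℂ :=
  (X * Yᴴ).trace

/-!
`C_u f` factors as `(u ⊙ F) * uᴴ`, where `F` is `f` read as a matrix. Right multiplication by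
the unitary `uᴴ` preserves the Hilbert–Schmidt product and is invertible, and since `u` has no
zero entry the Hadamard product with `u` is invertible too; the Hilbert–Schmidt product of
`u ⊙ F` and `u ⊙ G` is `⟨f, g⟩_u` entry by entry.
-/

section

variable {ι : Type*} [Fintype ι]

theorem Cmap_eq_hadamard_mul (u : Matrix ι ι ℂ) (f : ι × ι → ℂ) :
    Cmap u f = (u ⊙ of (Function.curry f)) * uᴴ := by
  ext k k'
  simp [Cmap, mul_apply]

theorem Cmap_add (u : Matrix ι ι ℂ) (f g : ι × ι → ℂ) :
    Cmap u (f + g) = Cmap u f + Cmap u g := by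
  simp only [Cmap_eq_hadamard_mul, ← Matrix.add_mul, ← hadamard_add]
  rfl

theorem Cmap_smul (u : Matrix ι ι ℂ) (c : ℂ) (f : ι × ι → ℂ) :
    Cmap u (c • f) = c • Cmap u f := by
  simp only [Cmap_eq_hadamard_mul, ← Matrix.smul_mul, ← hadamard_smul]
  rfl

theorem innerHS_eq_sum (A B : Matrix ι ι ℂ) :
    innerHS A B = ∑ k, ∑ l, A k l * starRingEnd ℂ (B k l) := by
  simp [innerHS, trace, mul_apply]

theorem innerHS_hadamard_hadamard (u : Matrix ι ι ℂ) (f g : ι × ι → ℂ) :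
    innerHS (u ⊙ of (Function.curry f)) (u ⊙ of (Function.curry g)) = innerU u f g := by
  rw [innerHS_eq_sum, innerU]
  refine sum_congr rfl fun k _ => sum_congr rfl fun l _ => ?_
  rw [← Complex.normSq_eq_norm_sq, ← Complex.mul_conj]
  simp only [hadamard_apply, of_apply, Function.curry_apply, map_mul]
  ring

variable [DecidableEq ι] {u : Matrix ι ι ℂ}

theorem innerHS_mul_of_mem_unitaryGroup {V : Matrix ι ι ℂ} (hV : V ∈ unitaryGroup ι ℂ)
    (A B : Matrix ι ι ℂ) : innerHS (A * V) (B * V) = innerHS A B := by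
  rw [innerHS, innerHS, conjTranspose_mul, Matrix.mul_assoc, ← Matrix.mul_assoc V,
    ← star_eq_conjTranspose, Unitary.mul_star_self_of_mem hV, Matrix.one_mul]

theorem Cmap_mul_self (hu : u ∈ unitaryGroup ι ℂ) (f : ι × ι → ℂ) :
    Cmap u f * u = u ⊙ of (Function.curry f) := by
  rw [Cmap_eq_hadamard_mul, Matrix.mul_assoc, ← star_eq_conjTranspose,
    Unitary.star_mul_self_of_mem hu, Matrix.mul_one]

theorem Cmap_injective (hu : u ∈ unitaryGroup ι ℂ) (hne : ∀ k l, u k l ≠ 0) :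
    Function.Injective (Cmap u) := by
  intro f g hfg
  have h := congrArg (· * u) hfg
  simp only [Cmap_mul_self hu] at h
  funext ⟨k, l⟩
  exact mul_left_cancel₀ (hne k l) (congrFun (congrFun h k) l)

theorem Cmap_surjective (hu : u ∈ unitaryGroup ι ℂ) (hne : ∀ k l, u k l ≠ 0) :
    Function.Surjective (Cmap u) := by
  intro X
  refine ⟨fun p => (X * u) p.1 p.2 / u p.1 p.2, ?_⟩
  have hsymb :
      u ⊙ of (Function.curry fun p : ι × ι => (X * u) p.1 p.2 / u p.1 p.2) = X * u := by
    ext k l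
    exact mul_div_cancel₀ _ (hne k l)
  rw [Cmap_eq_hadamard_mul, hsymb, Matrix.mul_assoc, ← star_eq_conjTranspose,
    Unitary.mul_star_self_of_mem hu, Matrix.mul_one]

theorem innerHS_Cmap (hu : u ∈ unitaryGroup ι ℂ) (f g : ι × ι → ℂ) :
    innerHS (Cmap u f) (Cmap u g) = innerU u f g := by
  rw [Cmap_eq_hadamard_mul, Cmap_eq_hadamard_mul,
    innerHS_mul_of_mem_unitaryGroup (V := uᴴ) (Unitary.star_mem hu), innerHS_hadamard_hadamard]

end

theorem stmt0_general (n : ℕ) (u : Matrix (Fin n) (Fin n) ℂ)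
    (hu : u * uᴴ = 1) (hne : ∀ k l, u k l ≠ 0) :
    Function.Bijective (Cmap u) ∧
    (∀ f g : Fin n × Fin n → ℂ, Cmap u (f + g) = Cmap u f + Cmap u g) ∧
    (∀ (c : ℂ) (f : Fin n × Fin n → ℂ), Cmap u (c • f) = c • Cmap u f) ∧
    (∀ f g : Fin n × Fin n → ℂ, innerHS (Cmap u f) (Cmap u g) = innerU u f g) := by
  have hu' : u ∈ unitaryGroup (Fin n) ℂ := mem_unitaryGroup_iff.mpr hu
  exact ⟨⟨Cmap_injective hu' hne, Cmap_surjective hu' hne⟩, Cmap_add u, Cmap_smul u,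
    innerHS_Cmap hu'⟩

/-- `C_u` is a unitary isomorphism from `(F(M), ⟨·,·⟩_u)` to
`(End F(K), ⟨·,·⟩_HS)`: it is a complex-linear bijection preserving the Hermitian products. -/
theorem stmt0 (n : ℕ) (hn : 1 ≤ n) (u : Matrix (Fin n) (Fin n) ℂ)
    (hu : u * uᴴ = 1) (hne : ∀ k l, u k l ≠ 0) :
    Function.Bijective (Cmap u) ∧
    (∀ f g : Fin n × Fin n → ℂ, Cmap u (f + g) = Cmap u f + Cmap u g) ∧
    (∀ (c : ℂ) (f : Fin n × Fin n → ℂ), Cmap u (c • f) = c • Cmap u f) ∧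
    (∀ f g : Fin n × Fin n → ℂ, innerHS (Cmap u f) (Cmap u g) = innerU u f g) :=
  stmt0_general n u hu hne
end

section
/- The map D_u from functions on Fin n × Fin n to n×n complex matrices is a unitary isomorphism: it is a complex-linear bijection, and for all f, g : Fin n × Fin n → ℂ, ⟨D_u f, D_u g⟩_HS = ⟨f, g⟩_u. -/
open Finset Matrix

/-- The symbol-to-operator map `D_u`. -/
noncomputable def Dmap {ι : Type*} [Fintype ι] (u : Matrix ι ι ℂ) (f : ι × ι → ℂ) :
    Matrix ι ι ℂ :=
  fun k k' => ∑ l, u k l * f (k', l) * (starRingEnd ℂ) (u k' l)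

/-!
`D_u f = u * S f`, where `S = symbolMatrix u` rescales the entries of `f` by the nonzero numbers
`conj (u k' l)` and transposes, hence is bijective; it carries `⟨·,·⟩_u` to `⟨·,·⟩_HS` because
`|u k' l|²` is exactly the squared modulus of the scaling factor. Left multiplication by the unitary
`u` is bijective and preserves `⟨·,·⟩_HS` by cyclicity of the trace.
-/

section

variable {ι : Type*} (u : Matrix ι ι ℂ)

noncomputable def symbolMatrix (f : ι × ι → ℂ) : Matrix ι ι ℂ :=
  of fun l k' => f (k', l) * starRingEnd ℂ (u k' l)

theorem symbolMatrix_bijective (hne : ∀ k l, u k l ≠ 0) : Function.Bijective (symbolMatrix u) := by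
  have hconj : ∀ k l, starRingEnd ℂ (u k l) ≠ 0 := fun k l => by simpa using hne k l
  refine Function.bijective_iff_has_inverse.mpr
    ⟨fun X p => X p.2 p.1 / starRingEnd ℂ (u p.1 p.2), fun f => ?_, fun X => ?_⟩
  · funext ⟨k, l⟩
    exact mul_div_cancel_right₀ _ (hconj k l)
  · ext l k
    exact div_mul_cancel₀ _ (hconj k l)

variable [Fintype ι]

theorem Dmap_eq_mul_symbolMatrix (f : ι × ι → ℂ) : Dmap u f = u * symbolMatrix u f := by
  ext k k'
  simp [Dmap, symbolMatrix, mul_apply, mul_assoc]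

theorem Dmap_add (f g : ι × ι → ℂ) : Dmap u (f + g) = Dmap u f + Dmap u g := by
  ext k k'
  simp [Dmap, sum_add_distrib, mul_add, add_mul]

theorem Dmap_smul (c : ℂ) (f : ι × ι → ℂ) : Dmap u (c • f) = c • Dmap u f := by
  ext k k'
  simp [Dmap, mul_sum, mul_left_comm, mul_assoc]

theorem innerHS_symbolMatrix (f g : ι × ι → ℂ) :
    innerHS (symbolMatrix u f) (symbolMatrix u g) = innerU u f g := by
  rw [innerHS, innerU, trace, sum_comm]
  refine sum_congr rfl fun l _ => sum_congr rfl fun k _ => ?_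
  have hnorm : Complex.ofReal (‖u k l‖ ^ 2) = starRingEnd ℂ (u k l) * u k l := by
    rw [mul_comm, Complex.mul_conj, Complex.sq_norm]
  simp only [conjTranspose_apply, symbolMatrix, of_apply, star_mul', Complex.star_def,
    Complex.conj_conj]
  rw [hnorm]
  ring

theorem innerHS_mul_left_of_unitary [DecidableEq ι] (hu : uᴴ * u = 1) (X Y : Matrix ι ι ℂ) :
    innerHS (u * X) (u * Y) = innerHS X Y := by
  rw [innerHS, innerHS, conjTranspose_mul, trace_mul_comm, Matrix.mul_assoc,
    ← Matrix.mul_assoc uᴴ, hu, Matrix.one_mul, trace_mul_comm]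

end

theorem stmt1_general (n : ℕ) (u : Matrix (Fin n) (Fin n) ℂ)
    (hu : u * uᴴ = 1) (hne : ∀ k l, u k l ≠ 0) :
    Function.Bijective (Dmap u) ∧
    (∀ f g : Fin n × Fin n → ℂ, Dmap u (f + g) = Dmap u f + Dmap u g) ∧
    (∀ (c : ℂ) (f : Fin n × Fin n → ℂ), Dmap u (c • f) = c • Dmap u f) ∧
    (∀ f g : Fin n × Fin n → ℂ, innerHS (Dmap u f) (Dmap u g) = innerU u f g) := by
  refine ⟨?_, Dmap_add u, Dmap_smul u, fun f g => ?_⟩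
  · have hmul : Function.Bijective (u * ·) :=
      IsUnit.isUnit_iff_mulLeft_bijective.mp (IsUnit.of_mul_eq_one _ hu)
    rw [show Dmap u = (u * ·) ∘ symbolMatrix u from funext (Dmap_eq_mul_symbolMatrix u)]
    exact hmul.comp (symbolMatrix_bijective u hne)
  · rw [Dmap_eq_mul_symbolMatrix, Dmap_eq_mul_symbolMatrix,
      innerHS_mul_left_of_unitary u (mul_eq_one_comm.mp hu), innerHS_symbolMatrix]

/-- `D_u` is a unitary isomorphism from `(F(M), ⟨·,·⟩_u)` to
`(End F(K), ⟨·,·⟩_HS)`: it is a complex-linear bijection preserving the Hermitian products. -/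
theorem stmt1 (n : ℕ) (hn : 1 ≤ n) (u : Matrix (Fin n) (Fin n) ℂ)
    (hu : u * uᴴ = 1) (hne : ∀ k l, u k l ≠ 0) :
    Function.Bijective (Dmap u) ∧
    (∀ f g : Fin n × Fin n → ℂ, Dmap u (f + g) = Dmap u f + Dmap u g) ∧
    (∀ (c : ℂ) (f : Fin n × Fin n → ℂ), Dmap u (c • f) = c • Dmap u f) ∧
    (∀ f g : Fin n × Fin n → ℂ, innerHS (Dmap u f) (Dmap u g) = innerU u f g) :=
  stmt1_general n u hu hne
end

section
/- For functions f, g : Fin n × Fin n → ℂ: (1) the matrix C_u f is skew-Hermitian (i.e. (C_u f)ᴴ = -(C_u f)) if and only if C_u f = -D_u (conj f); (2) the matrix D_u g is skew-Hermitian if and only if D_u g = -C_u (conj g); (3) if C_u f = D_u g, then this common matrix is skew-Hermitian if and only if f = -conj g. -/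
open Finset Matrix

lemma Cmap_conjT {ι : Type*} [Fintype ι] (u : Matrix ι ι ℂ) (f : ι × ι → ℂ) :
    (Cmap u f)ᴴ = Dmap u (fun p => (starRingEnd ℂ) (f p)) := by
  ext k k'
  simp only [conjTranspose_apply, Cmap, Dmap, star_sum]
  refine Finset.sum_congr rfl fun l _ => ?_
  simp only [star_mul', RingHomCompTriple.comp_apply, RingHom.id_apply]
  push_cast
  ring_nf
  simp [mul_comm, mul_left_comm]

lemma Dmap_conjT {ι : Type*} [Fintype ι] (u : Matrix ι ι ℂ) (f : ι × ι → ℂ) :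
    (Dmap u f)ᴴ = Cmap u (fun p => (starRingEnd ℂ) (f p)) := by
  ext k k'
  simp only [conjTranspose_apply, Cmap, Dmap, star_sum]
  refine Finset.sum_congr rfl fun l _ => ?_
  simp only [star_mul', RingHomCompTriple.comp_apply, RingHom.id_apply]
  ring_nf
  simp [mul_comm, mul_left_comm]

lemma Dmap_neg {ι : Type*} [Fintype ι] (u : Matrix ι ι ℂ) (f : ι × ι → ℂ) :
    Dmap u (fun p => -(f p)) = -(Dmap u f) := by
  ext k k'
  simp [Dmap, ← Finset.sum_neg_distrib]

lemma Dmap_inj {n : ℕ} (u : Matrix (Fin n) (Fin n) ℂ)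
    (hu : u * uᴴ = 1) (hne : ∀ k l, u k l ≠ 0) {h1 h2 : Fin n × Fin n → ℂ}
    (H : Dmap u h1 = Dmap u h2) : h1 = h2 := by
  have hu' : uᴴ * u = 1 := mul_eq_one_comm.mp hu
  funext p
  obtain ⟨k', l⟩ := p
  set w : Fin n → ℂ := fun l => (h1 (k', l) - h2 (k', l)) * (starRingEnd ℂ) (u k' l) with hw
  have hmul : u.mulVec w = 0 := by
    funext k
    have := congrFun (congrFun H k) k'
    simp only [Dmap] at this
    simp only [mulVec, dotProduct, hw, Pi.zero_apply]
    have key : ∑ l, (u k l * h1 (k', l) * (starRingEnd ℂ) (u k' l)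
        - u k l * h2 (k', l) * (starRingEnd ℂ) (u k' l)) = 0 := by
      rw [Finset.sum_sub_distrib, this, sub_self]
    rw [← key]
    refine Finset.sum_congr rfl fun l _ => ?_
    ring
  have hw0 : w = 0 := by
    have : uᴴ.mulVec (u.mulVec w) = w := by
      rw [mulVec_mulVec, hu', one_mulVec]
    rw [hmul, mulVec_zero] at this
    exact this.symm
  have := congrFun hw0 l
  simp only [hw, Pi.zero_apply, mul_eq_zero] at this
  rcases this with h | h
  · exact sub_eq_zero.mp h
  · exact absurd h (by simpa using hne k' l)

/-- characterization of the symbols of skew-Hermitian operators: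
(1) `C_u f` is skew-Hermitian iff `C_u f = -D_u (conj f)` (i.e. `f = -I_u (conj f)`);
(2) `D_u g` is skew-Hermitian iff `D_u g = -C_u (conj g)` (i.e. `I_u g = -conj g`);
(3) if `C_u f = D_u g` (i.e. `f = I_u g`), then this operator is skew-Hermitian iff
`f = -conj g`. -/
theorem stmt3 (n : ℕ) (hn : 1 ≤ n) (u : Matrix (Fin n) (Fin n) ℂ)
    (hu : u * uᴴ = 1) (hne : ∀ k l, u k l ≠ 0) (f g : Fin n × Fin n → ℂ) :
    ((Cmap u f)ᴴ = -(Cmap u f) ↔ Cmap u f = -(Dmap u (fun p => (starRingEnd ℂ) (f p)))) ∧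
    ((Dmap u g)ᴴ = -(Dmap u g) ↔ Dmap u g = -(Cmap u (fun p => (starRingEnd ℂ) (g p)))) ∧
    (Cmap u f = Dmap u g →
      ((Cmap u f)ᴴ = -(Cmap u f) ↔ f = fun p => -((starRingEnd ℂ) (g p)))) := by
  refine ⟨?_, ?_, ?_⟩
  · rw [Cmap_conjT, eq_comm, neg_eq_iff_eq_neg, eq_comm]
  · rw [Dmap_conjT, eq_comm, neg_eq_iff_eq_neg, eq_comm]
  · intro hCD
    rw [Cmap_conjT, hCD, ← Dmap_neg]
    constructor
    · intro h
      have := Dmap_inj u hu hne h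
      funext p
      have := congrFun this p
      have : f p = -(starRingEnd ℂ) (g p) := by
        have h2 := congrArg (starRingEnd ℂ) this
        simpa using h2
      exact this
    · intro h
      subst h
      simp [Dmap]
end

section
/- The eigenspaces of the Berezin transform are invariant under complex conjugation: if θ ∈ ℂ, g : Fin n × Fin n → ℂ, g ≠ 0, and D_u g = θ • C_u g (i.e. g is an eigenfunction of I_u = C_u⁻¹ ∘ D_u with eigenvalue θ), then |θ| = 1 and D_u (conj g) = θ • C_u (conj g). -/
/-!
Write `C_u f = (u ⊙ f) * uᴴ` and `D_u f = u * (fᵀ ⊙ uᴴ)`, viewing `f` as a matrix. As `u` is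
unitary, both have squared Hilbert–Schmidt norm `∑ |u k l|² |f (k, l)|²`, which is nonzero for
`f ≠ 0`; so `D_u g = θ • C_u g` forces `|θ| = 1`. Moreover `D_u (conj f) = (C_u f)ᴴ` and
`C_u (conj f) = (D_u f)ᴴ`, so taking adjoints in the eigenvalue equation and using
`conj θ = θ⁻¹` gives the eigenvalue equation for `conj g`.
-/

open Finset Matrix

open ComplexConjugate ComplexOrder

section HilbertSchmidt

variable {m n 𝕜 : Type*} [Fintype n] [RCLike 𝕜]

theorem Matrix.trace_conjTranspose_mul_self_eq_sum_norm_sq [Fintype m] (M : Matrix m n 𝕜) :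
    (Mᴴ * M).trace = ∑ i, ∑ j, ((‖M i j‖ ^ 2 : ℝ) : 𝕜) := by
  rw [Finset.sum_comm]
  simp [trace, mul_apply, RCLike.conj_mul]

variable [DecidableEq n]

theorem Matrix.conjTranspose_mul_self_of_unitary_mul {U : Matrix n n 𝕜} (hU : Uᴴ * U = 1)
    (B : Matrix n m 𝕜) : (U * B)ᴴ * (U * B) = Bᴴ * B := by
  rw [conjTranspose_mul, Matrix.mul_assoc, ← Matrix.mul_assoc Uᴴ, hU, Matrix.one_mul]

theorem Matrix.trace_conjTranspose_mul_self_of_mul_unitary {U : Matrix n n 𝕜}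
    (hU : Uᴴ * U = 1) [Fintype m] (A : Matrix m n 𝕜) :
    ((A * Uᴴ)ᴴ * (A * Uᴴ)).trace = (Aᴴ * A).trace := by
  rw [conjTranspose_mul, conjTranspose_conjTranspose, Matrix.mul_assoc, trace_mul_comm,
    Matrix.mul_assoc, Matrix.mul_assoc, hU, Matrix.mul_one]

end HilbertSchmidt

section Berezin

variable {ι : Type*} [Fintype ι] (u : Matrix ι ι ℂ)

theorem Cmap_eq_hadamard_mul_conjTranspose (f : ι × ι → ℂ) :
    Cmap u f = (u ⊙ of (Function.curry f)) * uᴴ := by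
  ext k k'
  simp [Cmap, mul_apply]

theorem Dmap_eq_mul_transpose_hadamard (f : ι × ι → ℂ) :
    Dmap u f = u * ((of (Function.curry f))ᵀ ⊙ uᴴ) := by
  ext k k'
  simp [Dmap, mul_apply, mul_assoc]

theorem Dmap_conj (f : ι × ι → ℂ) : Dmap u (fun p => conj (f p)) = (Cmap u f)ᴴ := by
  ext k k'
  simp only [Dmap, Cmap, conjTranspose_apply, RCLike.star_def, map_sum, map_mul,
    Complex.conj_conj]
  exact Finset.sum_congr rfl fun l _ => by ring

theorem Cmap_conj (f : ι × ι → ℂ) : Cmap u (fun p => conj (f p)) = (Dmap u f)ᴴ := by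
  ext k k'
  simp only [Dmap, Cmap, conjTranspose_apply, RCLike.star_def, map_sum, map_mul,
    Complex.conj_conj]
  exact Finset.sum_congr rfl fun l _ => by ring

variable [DecidableEq ι] {u}

theorem trace_Dmap_eq_trace_Cmap (hu : uᴴ * u = 1) (f : ι × ι → ℂ) :
    ((Dmap u f)ᴴ * Dmap u f).trace = ((Cmap u f)ᴴ * Cmap u f).trace := by
  rw [Dmap_eq_mul_transpose_hadamard, Cmap_eq_hadamard_mul_conjTranspose,
    conjTranspose_mul_self_of_unitary_mul hu, trace_conjTranspose_mul_self_of_mul_unitary hu,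
    trace_conjTranspose_mul_self_eq_sum_norm_sq, trace_conjTranspose_mul_self_eq_sum_norm_sq,
    Finset.sum_comm]
  simp [mul_comm]

theorem Cmap_ne_zero (hu : uᴴ * u = 1) (hne : ∀ k l, u k l ≠ 0) {f : ι × ι → ℂ} (hf : f ≠ 0) :
    Cmap u f ≠ 0 := by
  rw [Cmap_eq_hadamard_mul_conjTranspose]
  intro h
  have h' : u ⊙ of (Function.curry f) = 0 := by
    simpa [Matrix.mul_assoc, hu] using congrArg (· * u) h
  exact hf <| funext fun ⟨k, l⟩ => by
    simpa [hne k l] using congrFun (congrFun h' k) l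

end Berezin

theorem stmt4_general (n : ℕ) (u : Matrix (Fin n) (Fin n) ℂ)
    (hu : u * uᴴ = 1) (hne : ∀ k l, u k l ≠ 0) (θ : ℂ) (g : Fin n × Fin n → ℂ)
    (hg : g ≠ 0) (heig : Dmap u g = θ • Cmap u g) :
    ‖θ‖ = 1 ∧
      Dmap u (fun p => (starRingEnd ℂ) (g p)) =
        θ • Cmap u (fun p => (starRingEnd ℂ) (g p)) := by
  have hu' : uᴴ * u = 1 := mul_eq_one_comm.mp hu
  have hθ : conj θ * θ = 1 := by
    have hC : ((Cmap u g)ᴴ * Cmap u g).trace ≠ 0 :=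
      trace_conjTranspose_mul_self_eq_zero_iff.not.mpr (Cmap_ne_zero hu' hne hg)
    have hT := trace_Dmap_eq_trace_Cmap hu' g
    rw [heig, conjTranspose_smul, smul_mul_smul_comm, trace_smul, smul_eq_mul] at hT
    exact mul_right_cancel₀ hC (by simpa using hT)
  refine ⟨?_, ?_⟩
  · have h := Complex.conj_mul' θ
    rw [hθ] at h
    exact (pow_eq_one_iff_of_nonneg (norm_nonneg θ) two_ne_zero).mp (by exact_mod_cast h.symm)
  · rw [Dmap_conj, Cmap_conj, heig, conjTranspose_smul, smul_smul, RCLike.star_def, mul_comm, hθ,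
      one_smul]

/-- the eigenspaces of the Berezin transform `I_u = C_u⁻¹ ∘ D_u` are invariant
under complex conjugation; moreover every eigenvalue has modulus 1. The eigenvalue equation
`I_u g = θ g` is expressed as `D_u g = θ • C_u g`. -/
theorem stmt4 (n : ℕ) (hn : 1 ≤ n) (u : Matrix (Fin n) (Fin n) ℂ)
    (hu : u * uᴴ = 1) (hne : ∀ k l, u k l ≠ 0) (θ : ℂ) (g : Fin n × Fin n → ℂ)
    (hg : g ≠ 0) (heig : Dmap u g = θ • Cmap u g) :
    ‖θ‖ = 1 ∧
      Dmap u (fun p => (starRingEnd ℂ) (g p)) =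
        θ • Cmap u (fun p => (starRingEnd ℂ) (g p)) :=
  stmt4_general n u hu hne θ g hg heig
end

section
/- The complex dimension of the subspace {f : Fin n × Fin n → ℂ | C_u f = D_u f} (the eigenspace of the Berezin transform I_u with eigenvalue 1) is at least 2n - 1. -/
open Finset Matrix

/-- The symbol-to-operator map `C_u` as a complex-linear map. -/
noncomputable def CL {ι : Type*} [Fintype ι] (u : Matrix ι ι ℂ) :
    ((ι × ι) → ℂ) →ₗ[ℂ] Matrix ι ι ℂ where
  toFun f := fun k k' => ∑ l, u k l * f (k, l) * (starRingEnd ℂ) (u k' l)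
  map_add' f g := by
    ext k k'
    change _ = (∑ l : ι, (_ : ℂ)) + (∑ l : ι, (_ : ℂ))
    simp [mul_add, add_mul, Finset.sum_add_distrib]
  map_smul' c f := by
    ext k k'
    change _ = c * ∑ l, _
    simp only [Pi.smul_apply, smul_eq_mul, RingHom.id_apply, Matrix.smul_apply]
    rw [Finset.mul_sum]
    exact Finset.sum_congr rfl fun l _ => by ring

/-- The symbol-to-operator map `D_u` as a complex-linear map. -/
noncomputable def DL {ι : Type*} [Fintype ι] (u : Matrix ι ι ℂ) :
    ((ι × ι) → ℂ) →ₗ[ℂ] Matrix ι ι ℂ where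
  toFun f := fun k k' => ∑ l, u k l * f (k', l) * (starRingEnd ℂ) (u k' l)
  map_add' f g := by
    ext k k'
    change _ = (∑ l : ι, (_ : ℂ)) + (∑ l : ι, (_ : ℂ))
    simp [mul_add, add_mul, Finset.sum_add_distrib]
  map_smul' c f := by
    ext k k'
    change _ = c * ∑ l, _
    simp only [Pi.smul_apply, smul_eq_mul, RingHom.id_apply, Matrix.smul_apply]
    rw [Finset.mul_sum]
    exact Finset.sum_congr rfl fun l _ => by ring

/-!
Every symbol of the form `(k, l) ↦ a k + b l` lies in the kernel of `C_u - D_u` as soon as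
`u uᴴ` is diagonal: the difference `(C_u f - D_u f) k k'` is `(a k - a k') (u uᴴ) k k'`.
These symbols form the image of a linear map on a space of dimension `2n` whose kernel is the
line spanned by `(1, -1)`, so they span a subspace of dimension at least `2n - 1`.
-/

section SumSymbol

variable (R : Type*) [CommRing R] (ι : Type*)

def sumSymbol : ((ι → R) × (ι → R)) →ₗ[R] (ι × ι → R) :=
  (LinearMap.funLeft R R Prod.fst).coprod (LinearMap.funLeft R R Prod.snd)

variable {R ι}

@[simp]
theorem sumSymbol_apply (p : (ι → R) × (ι → R)) (kl : ι × ι) :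
    sumSymbol R ι p kl = p.1 kl.1 + p.2 kl.2 :=
  rfl

theorem ker_sumSymbol_le_span : LinearMap.ker (sumSymbol R ι) ≤ R ∙ (1, -1) := by
  intro p hp
  have hzero : ∀ k l, p.1 k + p.2 l = 0 := fun k l => congrFun hp (k, l)
  rw [Submodule.mem_span_singleton]
  cases isEmpty_or_nonempty ι with
  | inl _ => exact ⟨0, Subsingleton.elim _ _⟩
  | inr h =>
    obtain ⟨z⟩ := h
    refine ⟨p.1 z, Prod.ext (funext fun k => ?_) (funext fun l => ?_)⟩
    · simp only [Prod.smul_mk, smul_neg, Pi.smul_apply, Pi.one_apply, smul_eq_mul, mul_one]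
      linear_combination hzero z z - hzero k z
    · simp only [Prod.smul_mk, smul_neg, Pi.neg_apply, Pi.smul_apply, Pi.one_apply, smul_eq_mul,
        mul_one]
      linear_combination -hzero z l

end SumSymbol

theorem finrank_ker_sumSymbol_le_one (K ι : Type*) [Field K] [Fintype ι] :
    Module.finrank K (LinearMap.ker (sumSymbol K ι)) ≤ 1 :=
  calc Module.finrank K (LinearMap.ker (sumSymbol K ι))
      ≤ Module.finrank K (K ∙ ((1, -1) : (ι → K) × (ι → K))) :=
        Submodule.finrank_mono ker_sumSymbol_le_span
    _ ≤ 1 := by simpa using finrank_span_le_card ({(1, -1)} : Set ((ι → K) × (ι → K)))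

theorem le_finrank_range_sumSymbol (K ι : Type*) [Field K] [Fintype ι] :
    2 * Fintype.card ι - 1 ≤ Module.finrank K (LinearMap.range (sumSymbol K ι)) := by
  have hrank := LinearMap.finrank_range_add_finrank_ker (sumSymbol K ι)
  have hker := finrank_ker_sumSymbol_le_one K ι
  rw [Module.finrank_prod, Module.finrank_fintype_fun_eq_card] at hrank
  omega

theorem CL_sub_DL_apply {ι : Type*} [Fintype ι] (u : Matrix ι ι ℂ) (f : ι × ι → ℂ) (k k' : ι) :
    (CL u - DL u) f k k' = ∑ l, u k l * (f (k, l) - f (k', l)) * star (u k' l) := by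
  change (∑ l : ι, (_ : ℂ)) - (∑ l : ι, (_ : ℂ)) = _
  rw [← Finset.sum_sub_distrib]
  exact Finset.sum_congr rfl fun l _ => by rw [starRingEnd_apply]; ring

theorem range_sumSymbol_le_ker_CL_sub_DL {ι : Type*} [Fintype ι] {u : Matrix ι ι ℂ}
    (hu : (u * uᴴ).IsDiag) : LinearMap.range (sumSymbol ℂ ι) ≤ LinearMap.ker (CL u - DL u) := by
  rintro _ ⟨p, rfl⟩
  ext k k'
  have hdiff : (CL u - DL u) (sumSymbol ℂ ι p) k k' = (p.1 k - p.1 k') * (u * uᴴ) k k' := by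
    rw [CL_sub_DL_apply, Matrix.mul_apply, Finset.mul_sum]
    exact Finset.sum_congr rfl fun l _ => by simp only [sumSymbol_apply, conjTranspose_apply]; ring
  rw [hdiff]
  by_cases hkk' : k = k'
  · simp [hkk']
  · simp [hu hkk']

theorem stmt6_general (n : ℕ) (u : Matrix (Fin n) (Fin n) ℂ)
    (hu : u * uᴴ = 1) :
    2 * n - 1 ≤ Module.finrank ℂ ↥(LinearMap.ker (CL u - DL u)) :=
  calc 2 * n - 1 ≤ Module.finrank ℂ (LinearMap.range (sumSymbol ℂ (Fin n))) := by
        simpa using le_finrank_range_sumSymbol ℂ (Fin n)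
    _ ≤ _ := Submodule.finrank_mono (range_sumSymbol_le_ker_CL_sub_DL (hu ▸ isDiag_one))

/-- the eigenvalue-1 eigenspace `{f | C_u f = D_u f}` of the Berezin transform
`I_u` has complex dimension at least `2n - 1`. -/
theorem stmt6 (n : ℕ) (hn : 1 ≤ n) (u : Matrix (Fin n) (Fin n) ℂ)
    (hu : u * uᴴ = 1) (hne : ∀ k l, u k l ≠ 0) :
    2 * n - 1 ≤ Module.finrank ℂ ↥(LinearMap.ker (CL u - DL u)) :=
  stmt6_general n u hu
end

section
/- The Berezin transform is given by the explicit formula: for every f : Fin n × Fin n → ℂ, if h : Fin n × Fin n → ℂ is defined by h (k,l) = Σ_{k',l'} (u k l' * u k' l) / (u k l * u k' l') * f (k',l') * |u k' l'|², then C_u h = D_u f. -/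
open Finset Matrix

/-!
Since `‖z‖² / z = conj z`, multiplying the formula for `h (k, l)` by `u k l` gives exactly the
entry `(D_u f * u) k l`. On the other hand `C_u h` is the matrix `(u k l * h (k, l))` times `uᴴ`,
so `C_u h = D_u f * u * uᴴ = D_u f`.
-/

open ComplexConjugate

theorem Complex.ofReal_norm_sq_div_self (z : ℂ) : ((‖z‖ ^ 2 : ℝ) : ℂ) / z = conj z := by
  rcases eq_or_ne z 0 with rfl | hz
  · simp
  · rw [div_eq_iff hz, mul_comm, Complex.mul_conj']
    push_cast
    rfl

section Berezin

variable {ι : Type*} [Fintype ι] (u : Matrix ι ι ℂ)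

/-- The explicit formula for `I_u f`; for unitary `u` with nonvanishing entries it is
`C_u⁻¹ (D_u f)`. -/
noncomputable def berezinTransform (f : ι × ι → ℂ) : ι × ι → ℂ :=
  fun p => ∑ k', ∑ l', (u p.1 l' * u k' p.2) / (u p.1 p.2 * u k' l') * f (k', l') *
    ((‖u k' l'‖) ^ 2 : ℝ)

theorem Cmap_eq_mul_conjTranspose (h : ι × ι → ℂ) :
    Cmap u h = Matrix.of (fun k l => u k l * h (k, l)) * uᴴ := by
  ext k k'
  simp only [Cmap, Matrix.mul_apply, Matrix.of_apply, Matrix.conjTranspose_apply, starRingEnd_apply]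

theorem mul_berezinTransform_apply (f : ι × ι → ℂ) {k l : ι} (hkl : u k l ≠ 0) :
    u k l * berezinTransform u f (k, l) = (Dmap u f * u) k l := by
  simp only [berezinTransform, Dmap, Matrix.mul_apply, Finset.mul_sum, Finset.sum_mul]
  refine Finset.sum_congr rfl fun k' _ => Finset.sum_congr rfl fun l' _ => ?_
  rw [← Complex.ofReal_norm_sq_div_self]
  field_simp

theorem Cmap_berezinTransform [DecidableEq ι] (hu : u * uᴴ = 1) (hne : ∀ k l, u k l ≠ 0)
    (f : ι × ι → ℂ) :
    Cmap u (berezinTransform u f) = Dmap u f := by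
  have hentries : Matrix.of (fun k l => u k l * berezinTransform u f (k, l)) = Dmap u f * u := by
    ext k l
    exact mul_berezinTransform_apply u f (hne k l)
  rw [Cmap_eq_mul_conjTranspose, hentries, Matrix.mul_assoc, hu, Matrix.mul_one]

end Berezin

theorem stmt7_general (n : ℕ) (u : Matrix (Fin n) (Fin n) ℂ)
    (hu : u * uᴴ = 1) (hne : ∀ k l, u k l ≠ 0) (f h : Fin n × Fin n → ℂ)
    (hh : ∀ p : Fin n × Fin n, h p =
      ∑ k', ∑ l', (u p.1 l' * u k' p.2) / (u p.1 p.2 * u k' l') * f (k', l') *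
        ((‖u k' l'‖) ^ 2 : ℝ)) :
    Cmap u h = Dmap u f := by
  obtain rfl : h = berezinTransform u f := funext hh
  exact Cmap_berezinTransform u hu hne f

/-- the explicit formula for the Berezin transform `I_u`: the function
`h (k,l) = Σ_{k',l'} (u k l' * u k' l)/(u k l * u k' l') * f (k',l') * |u k' l'|²`
satisfies `C_u h = D_u f`, i.e. `h = I_u f`. -/
theorem stmt7 (n : ℕ) (hn : 1 ≤ n) (u : Matrix (Fin n) (Fin n) ℂ)
    (hu : u * uᴴ = 1) (hne : ∀ k l, u k l ≠ 0) (f h : Fin n × Fin n → ℂ)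
    (hh : ∀ p : Fin n × Fin n, h p =
      ∑ k', ∑ l', (u p.1 l' * u k' p.2) / (u p.1 p.2 * u k' l') * f (k', l') *
        ((‖u k' l'‖) ^ 2 : ℝ)) :
    Cmap u h = Dmap u f :=
  stmt7_general n u hu hne f h hh
end

section
/- Under the symmetry hypothesis, the symbol maps are equivariant: letting S be the n×n matrix with S k k' = a k if k' = σ⁻¹ k and S k k' = 0 otherwise, and (R f) (k,l) = f (σ⁻¹ k, τ⁻¹ l), one has C_u (R f) = S * (C_u f) * Sᴴ and D_u (R f) = S * (D_u f) * Sᴴ for every f : Fin n × Fin n → ℂ. -/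
open Finset Matrix

/-- The representation operator `R` associated to a pair of permutations. -/
def Rop {ι : Type*} (σ τ : Equiv.Perm ι) (f : ι × ι → ℂ) : ι × ι → ℂ :=
  fun p => f (σ⁻¹ p.1, τ⁻¹ p.2)

/- The symmetry hypothesis says `u = S u Tᴴ` with `T` the monomial unitary built from `τ` and `b`.
Conjugating `u · diag g · uᴴ` by `S` therefore amounts to conjugating `diag g` by `T`, which
permutes the diagonal by `τ` because `|b l| = 1`; both `C_u f` and `D_u f` are of this form
row by row (resp. column by column), with `g = f (k, ·)` (resp. `g = f (k', ·)`). -/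

section Equivariance

variable {ι : Type*} [Fintype ι]

theorem monomial_mul_mul_conjTranspose_apply [DecidableEq ι] {σ : Equiv.Perm ι} {a : ι → ℂ}
    {S : Matrix ι ι ℂ} (hS : ∀ k k', S k k' = if k' = σ⁻¹ k then a k else 0)
    (M : Matrix ι ι ℂ) (k k' : ι) :
    (S * M * Sᴴ) k k' = a k * M (σ⁻¹ k) (σ⁻¹ k') * starRingEnd ℂ (a k') := by
  simp [Matrix.mul_apply, Matrix.conjTranspose_apply, hS, apply_ite (starRingEnd ℂ)]

variable {u : Matrix ι ι ℂ} {σ τ : Equiv.Perm ι} {a b : ι → ℂ}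

theorem sum_mul_comp_mul_conj_of_symm (hb : ∀ l, ‖b l‖ = 1)
    (hsym : ∀ k l, a k * u (σ⁻¹ k) (τ⁻¹ l) * starRingEnd ℂ (b l) = u k l)
    (g : ι → ℂ) (k k' : ι) :
    ∑ l, u k l * g (τ⁻¹ l) * starRingEnd ℂ (u k' l) =
      a k * (∑ m, u (σ⁻¹ k) m * g m * starRingEnd ℂ (u (σ⁻¹ k') m)) * starRingEnd ℂ (a k') := by
  have hb' : ∀ l, starRingEnd ℂ (b l) * b l = 1 := fun l => by
    rw [Complex.conj_mul', hb, Complex.ofReal_one, one_pow]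
  calc ∑ l, u k l * g (τ⁻¹ l) * starRingEnd ℂ (u k' l)
      = ∑ l, a k * (u (σ⁻¹ k) (τ⁻¹ l) * g (τ⁻¹ l) * starRingEnd ℂ (u (σ⁻¹ k') (τ⁻¹ l))) *
          starRingEnd ℂ (a k') := by
        refine Finset.sum_congr rfl fun l _ => ?_
        rw [← hsym k l, ← hsym k' l]
        simp only [map_mul, Complex.conj_conj]
        linear_combination (a k * u (σ⁻¹ k) (τ⁻¹ l) * g (τ⁻¹ l) * starRingEnd ℂ (a k') *
          starRingEnd ℂ (u (σ⁻¹ k') (τ⁻¹ l))) * hb' l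
    _ = ∑ m, a k * (u (σ⁻¹ k) m * g m * starRingEnd ℂ (u (σ⁻¹ k') m)) * starRingEnd ℂ (a k') :=
        Equiv.sum_comp τ⁻¹ fun m =>
          a k * (u (σ⁻¹ k) m * g m * starRingEnd ℂ (u (σ⁻¹ k') m)) * starRingEnd ℂ (a k')
    _ = _ := by rw [← Finset.sum_mul, ← Finset.mul_sum]

variable {S : Matrix ι ι ℂ}

theorem Cmap_Rop [DecidableEq ι] (hb : ∀ l, ‖b l‖ = 1)
    (hsym : ∀ k l, a k * u (σ⁻¹ k) (τ⁻¹ l) * starRingEnd ℂ (b l) = u k l)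
    (hS : ∀ k k', S k k' = if k' = σ⁻¹ k then a k else 0) (f : ι × ι → ℂ) :
    Cmap u (Rop σ τ f) = S * Cmap u f * Sᴴ := by
  ext k k'
  rw [monomial_mul_mul_conjTranspose_apply hS]
  exact sum_mul_comp_mul_conj_of_symm hb hsym (fun m => f (σ⁻¹ k, m)) k k'

theorem Dmap_Rop [DecidableEq ι] (hb : ∀ l, ‖b l‖ = 1)
    (hsym : ∀ k l, a k * u (σ⁻¹ k) (τ⁻¹ l) * starRingEnd ℂ (b l) = u k l)
    (hS : ∀ k k', S k k' = if k' = σ⁻¹ k then a k else 0) (f : ι × ι → ℂ) :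
    Dmap u (Rop σ τ f) = S * Dmap u f * Sᴴ := by
  ext k k'
  rw [monomial_mul_mul_conjTranspose_apply hS]
  exact sum_mul_comp_mul_conj_of_symm hb hsym (fun m => f (σ⁻¹ k', m)) k k'

end Equivariance

theorem stmt9_general (n : ℕ) (u : Matrix (Fin n) (Fin n) ℂ)
    (σ τ : Equiv.Perm (Fin n)) (a b : Fin n → ℂ)
    (hb : ∀ l, ‖b l‖ = 1)
    (hsym : ∀ k l, a k * u (σ⁻¹ k) (τ⁻¹ l) * (starRingEnd ℂ) (b l) = u k l)
    (S : Matrix (Fin n) (Fin n) ℂ)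
    (hS : ∀ k k', S k k' = if k' = σ⁻¹ k then a k else 0) :
    ∀ f : Fin n × Fin n → ℂ,
      Cmap u (Rop σ τ f) = S * Cmap u f * Sᴴ ∧
      Dmap u (Rop σ τ f) = S * Dmap u f * Sᴴ :=
  fun f => ⟨Cmap_Rop hb hsym hS f, Dmap_Rop hb hsym hS f⟩

/-- the symbol maps `C_u` and `D_u` intertwine the representations `R` and
`Q = S · S*`, where `S` is the unitary operator `(S φ) k = a k · φ (σ⁻¹ k)`. -/
theorem stmt9 (n : ℕ) (hn : 1 ≤ n) (u : Matrix (Fin n) (Fin n) ℂ)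
    (hu : u * uᴴ = 1) (hne : ∀ k l, u k l ≠ 0)
    (σ τ : Equiv.Perm (Fin n)) (a b : Fin n → ℂ)
    (ha : ∀ k, ‖a k‖ = 1) (hb : ∀ l, ‖b l‖ = 1)
    (hsym : ∀ k l, a k * u (σ⁻¹ k) (τ⁻¹ l) * (starRingEnd ℂ) (b l) = u k l)
    (S : Matrix (Fin n) (Fin n) ℂ)
    (hS : ∀ k k', S k k' = if k' = σ⁻¹ k then a k else 0) :
    ∀ f : Fin n × Fin n → ℂ,
      Cmap u (Rop σ τ f) = S * Cmap u f * Sᴴ ∧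
      Dmap u (Rop σ τ f) = S * Dmap u f * Sᴴ :=
  stmt9_general n u σ τ a b hb hsym S hS
end

section
/- For the Fourier matrix u on ℤ/nℤ and any r, s ∈ ℤ/nℤ, the function e_{r,s} (k,l) = ε(r*k + s*l) satisfies D_u e_{r,s} = ε(r*s) • C_u e_{r,s}; that is, e_{r,s} is an eigenfunction of the Berezin transform I_u = C_u⁻¹ ∘ D_u with eigenvalue ε(r*s). -/
open Finset Matrix

/-!
The Fourier matrix is `u k l = c ψ(k l)` with `ψ` the standard additive character of `ZMod n`
and `c = 1/√n`. Since `conj ψ = ψ(-·)`, the `(k, k')` entries of `D_u e_{r,s}` and `C_u e_{r,s}`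
are `|c|² ψ(r k') S` and `|c|² ψ(r k) S`, where `S = ∑_l ψ(t l)` and `t = k + s - k'`.
Translating `l` by `r` gives `S = ψ(r t) S`, and `ψ(r k') ψ(r t) = ψ(r (k + s))`, which produces
the factor `ψ(r s)`.
-/

namespace AddChar

variable {R : Type*} [CommRing R] [Fintype R] (ψ : AddChar R ℂ)

lemma map_mul_mul_sum_map_mul (r t : R) :
    ψ (r * t) * ∑ l, ψ (t * l) = ∑ l, ψ (t * l) := by
  rw [mul_sum]
  exact Fintype.sum_equiv (Equiv.addRight r) _ _ fun l => by
    rw [Equiv.coe_addRight, ← map_add_eq_mul, mul_add, mul_comm r, add_comm]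

lemma sum_mul_map_mul_conj {c : ℂ} {u : Matrix R R ℂ} (hu : ∀ k l, u k l = c * ψ (k * l))
    (r s a k k' : R) :
    ∑ l, u k l * ψ (r * a + s * l) * (starRingEnd ℂ) (u k' l)
      = c * (starRingEnd ℂ) c * ψ (r * a) * ∑ l, ψ ((k + s - k') * l) := by
  rw [mul_sum]
  refine sum_congr rfl fun l _ => ?_
  have hψ : ψ ((k + s - k') * l) = ψ (k * l) * ψ (s * l) * ψ (-(k' * l)) := by
    rw [← map_add_eq_mul, ← map_add_eq_mul]
    ring_nf
  rw [hu, hu, hψ, map_neg_eq_conj, map_add_eq_mul, map_mul (starRingEnd ℂ)]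
  ring

theorem Dmap_eq_smul_Cmap {c : ℂ} {u : Matrix R R ℂ} (hu : ∀ k l, u k l = c * ψ (k * l))
    (r s : R) :
    Dmap u (fun p => ψ (r * p.1 + s * p.2))
      = ψ (r * s) • Cmap u (fun p => ψ (r * p.1 + s * p.2)) := by
  ext k k'
  simp only [Dmap, Cmap, Matrix.smul_apply, smul_eq_mul, sum_mul_map_mul_conj ψ hu]
  set S := ∑ l, ψ ((k + s - k') * l)
  have hshift : S = ψ (r * (k + s - k')) * S := (map_mul_mul_sum_map_mul ψ r _).symm
  have hchar : ψ (r * k') * ψ (r * (k + s - k')) = ψ (r * s) * ψ (r * k) := by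
    rw [← map_add_eq_mul, ← map_add_eq_mul]
    congr 1
    ring
  linear_combination c * (starRingEnd ℂ) c * ψ (r * k') * hshift
    + c * (starRingEnd ℂ) c * S * hchar

end AddChar

theorem stmt11_general (n : ℕ) [NeZero n]
    (ε : ZMod n → ℂ)
    (hε : ∀ m : ZMod n, ε m = Complex.exp (2 * Real.pi * Complex.I * m.val / n))
    (u : Matrix (ZMod n) (ZMod n) ℂ)
    (hu : ∀ k l, u k l = ε (k * l) / Real.sqrt n)
    (r s : ZMod n) (e : ZMod n × ZMod n → ℂ)
    (he : ∀ p : ZMod n × ZMod n, e p = ε (r * p.1 + s * p.2)) :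
    Dmap u e = ε (r * s) • Cmap u e := by
  have hε_std : ε = ZMod.stdAddChar := funext fun m => by
    rw [hε, ZMod.stdAddChar_apply, ZMod.toCircle_apply]
  have hu_std : ∀ k l, u k l = (Real.sqrt n : ℂ)⁻¹ * ZMod.stdAddChar (k * l) := fun k l => by
    rw [hu, hε_std, div_eq_inv_mul]
  obtain rfl : e = fun p => ZMod.stdAddChar (r * p.1 + s * p.2) := funext fun p => by
    rw [he, hε_std]
  rw [hε_std]
  exact ZMod.stdAddChar.Dmap_eq_smul_Cmap hu_std r s

/-- for the Fourier matrix `u k l = ε(k·l)/√n` on `ℤ/nℤ`, the function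
`e (k,l) = ε(r·k + s·l)` is an eigenfunction of the Berezin transform `I_u` with eigenvalue
`ε(r·s)`; the eigenvalue equation `I_u e = ε(r·s) e` is expressed as
`D_u e = ε(r·s) • C_u e`. -/
theorem stmt11 (n : ℕ) [NeZero n] (hn : 1 ≤ n)
    (ε : ZMod n → ℂ)
    (hε : ∀ m : ZMod n, ε m = Complex.exp (2 * Real.pi * Complex.I * m.val / n))
    (u : Matrix (ZMod n) (ZMod n) ℂ)
    (hu : ∀ k l, u k l = ε (k * l) / Real.sqrt n)
    (r s : ZMod n) (e : ZMod n × ZMod n → ℂ)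
    (he : ∀ p : ZMod n × ZMod n, e p = ε (r * p.1 + s * p.2)) :
    Dmap u e = ε (r * s) • Cmap u e :=
  stmt11_general n ε hε u hu r s e he
end

section
/- Let θ ∈ ℂ with |θ| = 1, θ ≠ 1, and θ ≠ -1, and let u be the n×n complex matrix with u k l = (if k = l then 1 else 0) + (θ - 1)/n. Then u is unitary (u * uᴴ = 1) and every entry of u is nonzero. -/
/-!
Writing `J` for the all-ones matrix, `u = 1 + c • J` with `c = (θ - 1) / n`. Since `J * J = n • J`,
`u * uᴴ = 1 + (c + c̄ + n c c̄) • J`, and `n (c + c̄ + n c c̄) = θ θ̄ - 1 = 0`.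
The off-diagonal entries are `c ≠ 0`; a diagonal entry `1 + c` vanishes only if `θ = 1 - n`,
which has norm `1` only for `n = 2`, i.e. `θ = -1`.
-/

open Matrix

namespace Matrix

variable {ι α : Type*} [Fintype ι]

theorem of_one_mul_of_one [NonAssocSemiring α] :
    (of 1 : Matrix ι ι α) * of 1 = (Fintype.card ι : α) • of 1 := by
  ext i j
  simp [mul_apply]

omit [Fintype ι] in
@[simp]
theorem conjTranspose_of_one [Semiring α] [StarRing α] : (of 1 : Matrix ι ι α)ᴴ = of 1 := by
  ext i j
  simp

variable [DecidableEq ι]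

theorem one_add_smul_of_one_mul_one_add_smul_of_one [CommRing α] (a b : α) :
    (1 + a • of 1 : Matrix ι ι α) * (1 + b • of 1) =
      1 + (a + b + Fintype.card ι * a * b) • of 1 := by
  rw [mul_add, add_mul, add_mul, smul_mul_smul, of_one_mul_of_one, smul_smul]
  simp only [mul_one, one_mul]
  module

theorem one_add_smul_of_one_mem_unitaryGroup {K : Type*} [Field K] [StarRing K] {θ : K}
    (hθ : star θ * θ = 1) :
    (1 + ((θ - 1) / Fintype.card ι) • of 1 : Matrix ι ι K) ∈ unitaryGroup ι K := by
  rw [mem_unitaryGroup_iff, star_eq_conjTranspose, conjTranspose_add, conjTranspose_one,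
    conjTranspose_smul, conjTranspose_of_one, one_add_smul_of_one_mul_one_add_smul_of_one]
  rcases eq_or_ne (Fintype.card ι : K) 0 with hn | hn
  · simp [hn]
  · convert add_zero (1 : Matrix ι ι K)
    rw [smul_eq_zero]
    left
    simp only [star_div₀, star_sub, star_one, star_natCast]
    field_simp
    linear_combination hθ

end Matrix

theorem Complex.eq_neg_one_of_norm_eq_one_of_eq_one_sub_natCast {θ : ℂ} {n : ℕ} (hθ : ‖θ‖ = 1)
    (h : θ = 1 - n) (hn : n ≠ 0) : θ = -1 := by
  have hn1 : (1 : ℝ) ≤ n := by exact_mod_cast Nat.one_le_iff_ne_zero.mpr hn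
  have hnorm : ‖(1 - n : ℂ)‖ = n - 1 := by
    rw [← norm_neg, neg_sub, ← Complex.ofReal_natCast, ← Complex.ofReal_one, ← Complex.ofReal_sub,
      Complex.norm_real, Real.norm_of_nonneg (by linarith)]
  have hn2 : (n : ℂ) = 2 := by
    rw [h, hnorm] at hθ
    exact_mod_cast (by linarith : (n : ℝ) = 2)
  rw [h, hn2]
  norm_num

theorem stmt14_general (n : ℕ) (θ : ℂ)
    (hθ : ‖θ‖ = 1) (hθ1 : θ ≠ 1) (hθ2 : θ ≠ -1)
    (u : Matrix (Fin n) (Fin n) ℂ)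
    (hu : ∀ k l, u k l = (if k = l then 1 else 0) + (θ - 1) / (n : ℂ)) :
    u * uᴴ = 1 ∧ ∀ k l, u k l ≠ 0 := by
  refine ⟨?_, fun k l => ?_⟩
  · have hu' : u = 1 + ((θ - 1) / Fintype.card (Fin n)) • of 1 := by
      ext k l
      simp [hu, one_apply]
    have hθ' : star θ * θ = 1 := by
      rw [Complex.star_def, Complex.conj_mul', hθ]
      norm_num
    rw [hu']
    exact mem_unitaryGroup_iff.mp (one_add_smul_of_one_mem_unitaryGroup hθ')
  · have hn : n ≠ 0 := k.pos.ne'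
    rw [hu]
    split_ifs
    · intro h
      refine hθ2 (Complex.eq_neg_one_of_norm_eq_one_of_eq_one_sub_natCast hθ ?_ hn)
      field_simp at h
      linear_combination h
    · rw [zero_add]
      exact div_ne_zero (sub_ne_zero.mpr hθ1) (Nat.cast_ne_zero.mpr hn)

/-- for `|θ| = 1`, `θ ≠ ±1`, the matrix `u k l = δ_{kl} + (θ - 1)/n` is unitary
and has nonzero entries. -/
theorem stmt14 (n : ℕ) (hn : 1 ≤ n) (θ : ℂ)
    (hθ : ‖θ‖ = 1) (hθ1 : θ ≠ 1) (hθ2 : θ ≠ -1)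
    (u : Matrix (Fin n) (Fin n) ℂ)
    (hu : ∀ k l, u k l = (if k = l then 1 else 0) + (θ - 1) / (n : ℂ)) :
    u * uᴴ = 1 ∧ ∀ k l, u k l ≠ 0 :=
  stmt14_general n θ hθ hθ1 hθ2 u hu
end

section
/- Let θ ∈ ℂ with |θ| = 1, θ ≠ 1, θ ≠ -1, and let u be the n×n matrix with u k l = (if k = l then 1 else 0) + (θ - 1)/n. If f : Fin n × Fin n → ℂ is antisymmetric (f (k,l) = -f (l,k) for all k, l) and has all row sums zero (Σ_l f (k,l) = 0 for all k), then D_u f = (conj θ) • C_u f; that is, f is an eigenfunction of the Berezin transform I_u with eigenvalue conj θ. -/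
open Finset Matrix

/-!
For `u = 1 + c J` (with `J` the all-ones matrix), expanding the defining sums of `C_u f` and
`D_u f` leaves only the entry `f (k, k')`, resp. `f (k', k)`, once the diagonal of `f` and its
row sums vanish: `C_u f = c f` and `D_u f = conj c fᵀ`. Antisymmetry turns `fᵀ` into `-f`, and
`|θ| = 1` gives `-conj ((θ - 1) / n) = conj θ (θ - 1) / n`.
-/

lemma diag_eq_zero_of_antisymm {ι : Type*} {f : ι × ι → ℂ} (hanti : ∀ k l, f (k, l) = -f (l, k))
    (k : ι) : f (k, k) = 0 := by
  linear_combination (1 / 2 : ℂ) * hanti k k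

section OnePlusConst

variable {ι : Type*} [Fintype ι] [DecidableEq ι]

lemma sum_ite_add_mul_mul_ite_add (g : ι → ℂ) (c d : ℂ) (k k' : ι) :
    ∑ l, ((if k = l then 1 else 0) + c) * g l * ((if k' = l then 1 else 0) + d) =
      (if k = k' then g k else 0) + d * g k + c * g k' + c * d * ∑ l, g l := by
  have hterm : ∀ l, ((if k = l then (1 : ℂ) else 0) + c) * g l * ((if k' = l then 1 else 0) + d) =
      (if k = l then (if k' = l then g l else 0) else 0) + (if k = l then d * g l else 0) +
        (if k' = l then c * g l else 0) + c * d * g l := by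
    intro l; split_ifs <;> ring
  simp only [hterm, sum_add_distrib, sum_ite_eq, mem_univ, if_true, ← mul_sum]
  rcases eq_or_ne k k' with rfl | hkk'
  · simp
  · simp [hkk', hkk'.symm]

variable {u : Matrix ι ι ℂ} {c : ℂ} {f : ι × ι → ℂ}

lemma sum_mul_mul_conj_of_eq_ite_add (hu : ∀ k l, u k l = (if k = l then 1 else 0) + c)
    (g : ι → ℂ) (k k' : ι) :
    ∑ l, u k l * g l * (starRingEnd ℂ) (u k' l) =
      (if k = k' then g k else 0) + (starRingEnd ℂ) c * g k + c * g k' +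
        c * (starRingEnd ℂ) c * ∑ l, g l := by
  simp only [hu, map_add, apply_ite (starRingEnd ℂ), map_one, map_zero]
  exact sum_ite_add_mul_mul_ite_add g c _ k k'

lemma Cmap_apply_of_eq_ite_add (hu : ∀ k l, u k l = (if k = l then 1 else 0) + c)
    (hdiag : ∀ k, f (k, k) = 0) (hrow : ∀ k, ∑ l, f (k, l) = 0) (k k' : ι) :
    Cmap u f k k' = c * f (k, k') := by
  rw [Cmap, sum_mul_mul_conj_of_eq_ite_add hu (fun l => f (k, l)), hrow, hdiag]
  split_ifs with hkk'
  · subst hkk'; simp [hdiag]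
  · simp

lemma Dmap_apply_of_eq_ite_add (hu : ∀ k l, u k l = (if k = l then 1 else 0) + c)
    (hdiag : ∀ k, f (k, k) = 0) (hrow : ∀ k, ∑ l, f (k, l) = 0) (k k' : ι) :
    Dmap u f k k' = (starRingEnd ℂ) c * f (k', k) := by
  rw [Dmap, sum_mul_mul_conj_of_eq_ite_add hu (fun l => f (k', l)), hrow, hdiag]
  split_ifs with hkk'
  · subst hkk'; simp [hdiag]
  · simp

end OnePlusConst

lemma neg_conj_sub_one_div_natCast {θ : ℂ} (hθ : ‖θ‖ = 1) (m : ℕ) :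
    -(starRingEnd ℂ) ((θ - 1) / m) = (starRingEnd ℂ) θ * ((θ - 1) / m) := by
  have hθθ : (starRingEnd ℂ) θ * θ = 1 := by
    rw [Complex.conj_mul', hθ]; norm_num
  rw [map_div₀, map_sub, map_one, map_natCast]
  linear_combination -(m : ℂ)⁻¹ * hθθ

theorem stmt15_general (n : ℕ) (θ : ℂ)
    (hθ : ‖θ‖ = 1)
    (u : Matrix (Fin n) (Fin n) ℂ)
    (hu : ∀ k l, u k l = (if k = l then 1 else 0) + (θ - 1) / (n : ℂ))
    (f : Fin n × Fin n → ℂ)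
    (hanti : ∀ k l, f (k, l) = -f (l, k))
    (hrow : ∀ k, ∑ l, f (k, l) = 0) :
    Dmap u f = (starRingEnd ℂ) θ • Cmap u f := by
  have hdiag := diag_eq_zero_of_antisymm hanti
  ext k k'
  rw [Matrix.smul_apply, smul_eq_mul, Dmap_apply_of_eq_ite_add hu hdiag hrow,
    Cmap_apply_of_eq_ite_add hu hdiag hrow, hanti k' k]
  linear_combination f (k, k') * neg_conj_sub_one_div_natCast hθ n

/-- for the unitary matrix `u k l = δ_{kl} + (θ - 1)/n` with `|θ| = 1`,
`θ ≠ ±1`, every antisymmetric function `f` with zero row sums is an eigenfunction of the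
Berezin transform `I_u` with eigenvalue `conj θ`; the eigenvalue equation is expressed as
`D_u f = conj θ • C_u f`. -/
theorem stmt15 (n : ℕ) (hn : 1 ≤ n) (θ : ℂ)
    (hθ : ‖θ‖ = 1) (hθ1 : θ ≠ 1) (hθ2 : θ ≠ -1)
    (u : Matrix (Fin n) (Fin n) ℂ)
    (hu : ∀ k l, u k l = (if k = l then 1 else 0) + (θ - 1) / (n : ℂ))
    (f : Fin n × Fin n → ℂ)
    (hanti : ∀ k l, f (k, l) = -f (l, k))
    (hrow : ∀ k, ∑ l, f (k, l) = 0) :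
    Dmap u f = (starRingEnd ℂ) θ • Cmap u f :=
  stmt15_general n θ hθ u hu f hanti hrow
end

section
/- Let θ ∈ ℂ with |θ| = 1, θ ≠ 1, θ ≠ -1, and let u be the n×n matrix with u k l = (if k = l then 1 else 0) + (θ - 1)/n. If f : Fin n × Fin n → ℂ is symmetric (f (k,l) = f (l,k) for all k, l), vanishes on the diagonal (f (k,k) = 0 for all k), and has all row sums zero (Σ_l f (k,l) = 0 for all k), then D_u f = (-(conj θ)) • C_u f; that is, f is an eigenfunction of the Berezin transform I_u with eigenvalue -conj θ. -/
open Finset Matrix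

/-!
Write `u = 1 + c J` with `c = (θ - 1) / n` and `J` the all-ones matrix. Expanding `C_u f` and
`D_u f`, the term with `J` on both sides vanishes because the rows of `f` sum to zero, and every
term involving a diagonal value `f (k, k)` vanishes, leaving `C_u f = c • f` and
`D_u f = conj c • fᵀ`. By symmetry `fᵀ = f`, and `|θ| = 1` gives
`conj (θ - 1) = -conj θ * (θ - 1)`, i.e. `conj c = -conj θ * c`.
-/

section OnePlusConst

variable {ι : Type*} [DecidableEq ι] {u : Matrix ι ι ℂ} {c : ℂ} {f : ι × ι → ℂ}

lemma conj_one_add_const (hu : ∀ k l, u k l = (if k = l then 1 else 0) + c) (k l : ι) :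
    starRingEnd ℂ (u k l) = (if k = l then 1 else 0) + starRingEnd ℂ c := by
  simp [hu, apply_ite]

variable [Fintype ι]

lemma sum_one_add_const_mul_mul_one_add_const (a b : ℂ) {g : ι → ℂ} (hg : ∑ l, g l = 0)
    (k k' : ι) :
    ∑ l, ((if k = l then 1 else 0) + a) * g l * ((if k' = l then 1 else 0) + b)
      = (if k = k' then g k else 0) + b * g k + a * g k' := by
  simp only [add_mul, mul_add, Finset.sum_add_distrib, ite_mul, one_mul, zero_mul, mul_ite,
    mul_one, mul_zero, Finset.sum_ite_eq, Finset.mem_univ, if_true, ← Finset.mul_sum,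
    ← Finset.sum_mul, hg]
  by_cases h : k = k' <;> simp only [h, if_true, if_false] <;> ring

lemma Cmap_eq_smul_of_one_add_const (hu : ∀ k l, u k l = (if k = l then 1 else 0) + c)
    (hdiag : ∀ k, f (k, k) = 0) (hrow : ∀ k, ∑ l, f (k, l) = 0) :
    Cmap u f = c • Matrix.of (Function.curry f) := by
  ext k k'
  simp only [Cmap, conj_one_add_const hu]
  simp only [hu]
  rw [sum_one_add_const_mul_mul_one_add_const _ _ (hrow k)]
  simp [hdiag]

lemma Dmap_eq_smul_of_one_add_const (hu : ∀ k l, u k l = (if k = l then 1 else 0) + c)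
    (hdiag : ∀ k, f (k, k) = 0) (hrow : ∀ k, ∑ l, f (k, l) = 0) :
    Dmap u f = starRingEnd ℂ c • (Matrix.of (Function.curry f))ᵀ := by
  ext k k'
  simp only [Dmap, conj_one_add_const hu]
  simp only [hu]
  rw [sum_one_add_const_mul_mul_one_add_const _ _ (hrow k')]
  split_ifs with h <;> simp [h, hdiag]

end OnePlusConst

lemma Complex.conj_sub_one_of_norm_eq_one {θ : ℂ} (hθ : ‖θ‖ = 1) :
    starRingEnd ℂ (θ - 1) = -starRingEnd ℂ θ * (θ - 1) := by
  have hconj_mul : starRingEnd ℂ θ * θ = 1 := by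
    rw [Complex.conj_mul', hθ]; norm_num
  rw [map_sub, map_one]
  linear_combination hconj_mul

theorem stmt16_general (n : ℕ) (θ : ℂ)
    (hθ : ‖θ‖ = 1)
    (u : Matrix (Fin n) (Fin n) ℂ)
    (hu : ∀ k l, u k l = (if k = l then 1 else 0) + (θ - 1) / (n : ℂ))
    (f : Fin n × Fin n → ℂ)
    (hsymm : ∀ k l, f (k, l) = f (l, k))
    (hdiag : ∀ k, f (k, k) = 0)
    (hrow : ∀ k, ∑ l, f (k, l) = 0) :
    Dmap u f = (-(starRingEnd ℂ) θ) • Cmap u f := by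
  have hf : (Matrix.of (Function.curry f))ᵀ = Matrix.of (Function.curry f) :=
    Matrix.ext fun k l => hsymm l k
  rw [Dmap_eq_smul_of_one_add_const hu hdiag hrow, Cmap_eq_smul_of_one_add_const hu hdiag hrow,
    hf, smul_smul, map_div₀, Complex.conj_natCast, Complex.conj_sub_one_of_norm_eq_one hθ,
    mul_div_assoc]

/-- for the unitary matrix `u k l = δ_{kl} + (θ - 1)/n` with `|θ| = 1`,
`θ ≠ ±1`, every symmetric function `f` vanishing on the diagonal and with zero row sums is
an eigenfunction of the Berezin transform `I_u` with eigenvalue `-conj θ`; the eigenvalue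
equation is expressed as `D_u f = -conj θ • C_u f`. -/
theorem stmt16 (n : ℕ) (hn : 1 ≤ n) (θ : ℂ)
    (hθ : ‖θ‖ = 1) (hθ1 : θ ≠ 1) (hθ2 : θ ≠ -1)
    (u : Matrix (Fin n) (Fin n) ℂ)
    (hu : ∀ k l, u k l = (if k = l then 1 else 0) + (θ - 1) / (n : ℂ))
    (f : Fin n × Fin n → ℂ)
    (hsymm : ∀ k l, f (k, l) = f (l, k))
    (hdiag : ∀ k, f (k, k) = 0)
    (hrow : ∀ k, ∑ l, f (k, l) = 0) :
    Dmap u f = (-(starRingEnd ℂ) θ) • Cmap u f :=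
  stmt16_general n θ hθ u hu f hsymm hdiag hrow
end

section
/- The map μ from unitary to doubly stochastic matrices is a submersion at the matrix u k l = (if k = l then 1 else 0) + (θ - 1)/n, where |θ| = 1, θ ≠ 1, θ ≠ -1: the real-linear map sending v to the real matrix (k,l) ↦ 2·Re(v k l * conj (u k l)), restricted to the real subspace {v : n×n complex matrices | v * uᴴ + u * vᴴ = 0}, has image equal to the full space {q : n×n real matrices | Σ_l q k l = 0 for every k, and Σ_k q k l = 0 for every l}. -/
/-!
At a unitary `u`, the row and column sums of `dμ(v)` are `2 Re` of the diagonal entries of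
`v uᴴ` and `uᴴ v`, which are skew-Hermitian for a tangent vector `v`; so the image lies in the
tangent space of the Birkhoff polytope. Conversely, write `u = 1 + c J` with `J` the all-ones
matrix and `c = (θ - 1)/n`; `|θ| = 1` makes `u` unitary and `θ ≠ ±1` gives `Re c ≠ 0 ≠ Im c`.
Given `q` with vanishing line sums, pick a skew-Hermitian `w` with `2 Re (w * conj c) = q` and
vanishing row sums. Then `w J = 0`, so `v = w u = w` is tangent at `u` and `dμ(v) = q`.
-/

open Finset Matrix ComplexConjugate

namespace Birkhoff

variable {ι : Type*}

/-- The derivative at `u` of `u ↦ (|u k l|²)`, applied to `v`. -/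
def tangentMap (u v : Matrix ι ι ℂ) : Matrix ι ι ℝ :=
  of fun k l => 2 * (v k l * conj (u k l)).re

lemma re_apply_self_eq_zero {A : Matrix ι ι ℂ} (hA : Aᴴ = -A) (k : ι) : (A k k).re = 0 := by
  have := congrArg Complex.re (congrFun (congrFun hA k) k)
  simp only [conjTranspose_apply, Complex.star_def, Complex.conj_re, Matrix.neg_apply,
    Complex.neg_re] at this
  linarith

lemma conjTranspose_mul_conjTranspose_eq_neg [Fintype ι] {u v : Matrix ι ι ℂ}
    (hv : v * uᴴ + u * vᴴ = 0) : (v * uᴴ)ᴴ = -(v * uᴴ) := by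
  rw [conjTranspose_mul, conjTranspose_conjTranspose, eq_neg_iff_add_eq_zero, add_comm, hv]

section Unitary

variable [Fintype ι] [DecidableEq ι] {u v : Matrix ι ι ℂ}

lemma conjTranspose_mul_eq_neg (hu : u * uᴴ = 1) (hv : v * uᴴ + u * vᴴ = 0) :
    (uᴴ * v)ᴴ = -(uᴴ * v) := by
  have hconj : uᴴ * v = uᴴ * (v * uᴴ) * u := by
    rw [Matrix.mul_assoc, Matrix.mul_assoc, mul_eq_one_comm.mp hu, Matrix.mul_one]
  rw [hconj, conjTranspose_mul, conjTranspose_mul, conjTranspose_conjTranspose,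
    conjTranspose_mul_conjTranspose_eq_neg hv, Matrix.neg_mul, Matrix.mul_neg, ← Matrix.mul_assoc]

lemma tangent_mul_of_conjTranspose_eq_neg (hu : u * uᴴ = 1) {w : Matrix ι ι ℂ}
    (hw : wᴴ = -w) : (w * u) * uᴴ + u * (w * u)ᴴ = 0 := by
  rw [Matrix.mul_assoc, hu, Matrix.mul_one, conjTranspose_mul, ← Matrix.mul_assoc, hu,
    Matrix.one_mul, hw, add_neg_cancel]

/-- The `k`-th row sum of `tangentMap u v` is `2 Re (v uᴴ)ₖₖ` and the `l`-th column sum is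
`2 Re (uᴴ v)ₗₗ`; both matrices are skew-Hermitian for a tangent vector `v`. -/
theorem tangentMap_image_subset (hu : u * uᴴ = 1) :
    tangentMap u '' {v | v * uᴴ + u * vᴴ = 0} ⊆
      {q | (∀ k, ∑ l, q k l = 0) ∧ (∀ l, ∑ k, q k l = 0)} := by
  rintro _ ⟨v, hv, rfl⟩
  refine ⟨fun k => ?_, fun l => ?_⟩
  · calc ∑ l, tangentMap u v k l = 2 * ((v * uᴴ) k k).re := by
          simp [tangentMap, mul_apply, Complex.re_sum, Finset.mul_sum]
      _ = 0 := by rw [re_apply_self_eq_zero (conjTranspose_mul_conjTranspose_eq_neg hv), mul_zero]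
  · calc ∑ k, tangentMap u v k l = 2 * ((uᴴ * v) l l).re := by
          simp [tangentMap, mul_apply, Complex.re_sum, Finset.mul_sum, mul_comm]
      _ = 0 := by rw [re_apply_self_eq_zero (conjTranspose_mul_eq_neg hu hv), mul_zero]

end Unitary

def allOnes (ι : Type*) : Matrix ι ι ℂ := of fun _ _ => 1

lemma conjTranspose_allOnes : (allOnes ι)ᴴ = allOnes ι := by
  ext; simp [allOnes]

section AllOnes

variable [Fintype ι]

lemma allOnes_mul_allOnes : allOnes ι * allOnes ι = (Fintype.card ι : ℂ) • allOnes ι := by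
  ext; simp [allOnes, mul_apply]

lemma mul_allOnes_eq_zero {w : Matrix ι ι ℂ} (hw : ∀ k, ∑ l, w k l = 0) :
    w * allOnes ι = 0 := by
  ext; simp [allOnes, mul_apply, hw]

lemma one_add_smul_allOnes_mul_conjTranspose [DecidableEq ι] (c : ℂ) :
    (1 + c • allOnes ι) * (1 + c • allOnes ι)ᴴ =
      1 + (c + conj c + Fintype.card ι * (c * conj c)) • allOnes ι := by
  rw [conjTranspose_add, conjTranspose_one, conjTranspose_smul, conjTranspose_allOnes]
  simp only [Matrix.add_mul, Matrix.mul_add, Matrix.one_mul, Matrix.mul_one, Matrix.smul_mul,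
    Matrix.mul_smul, allOnes_mul_allOnes, smul_smul, Complex.star_def]
  module

end AllOnes

lemma tangentMap_one_add_smul_allOnes [DecidableEq ι] (c : ℂ) {w : Matrix ι ι ℂ}
    (hw : wᴴ = -w) : tangentMap (1 + c • allOnes ι) w = of fun k l => 2 * (w k l * conj c).re := by
  ext k l
  by_cases hkl : k = l
  · subst hkl
    simp [tangentMap, allOnes, Complex.mul_re, re_apply_self_eq_zero hw]
  · simp [tangentMap, allOnes, hkl]

/-- Since `Re (w * conj c) = Re w * Re c + Im w * Im c`, the antisymmetric part of `q` can be
carried by `Re w` and the symmetric part by `Im w`. -/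
noncomputable def skewLift (c : ℂ) (q : Matrix ι ι ℝ) : Matrix ι ι ℂ :=
  of fun k l => ((q k l - q l k) / (4 * c.re) : ℝ) + ((q k l + q l k) / (4 * c.im) : ℝ) * Complex.I

lemma conjTranspose_skewLift (c : ℂ) (q : Matrix ι ι ℝ) : (skewLift c q)ᴴ = -skewLift c q := by
  ext k l
  simp only [skewLift, conjTranspose_apply, of_apply, Matrix.neg_apply, star_add, star_mul',
    Complex.star_def, Complex.conj_ofReal, Complex.conj_I]
  push_cast
  ring

lemma two_mul_re_skewLift_mul_conj {c : ℂ} (hre : c.re ≠ 0) (him : c.im ≠ 0)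
    (q : Matrix ι ι ℝ) (k l : ι) : 2 * (skewLift c q k l * conj c).re = q k l := by
  simp only [skewLift, of_apply, Complex.mul_re, Complex.add_re, Complex.add_im, Complex.mul_im,
    Complex.ofReal_re, Complex.ofReal_im, Complex.I_re, Complex.I_im, Complex.conj_re,
    Complex.conj_im]
  field_simp
  ring

lemma sum_skewLift_row [Fintype ι] {q : Matrix ι ι ℝ} (hrow : ∀ k, ∑ l, q k l = 0)
    (hcol : ∀ l, ∑ k, q k l = 0) (c : ℂ) (k : ι) : ∑ l, skewLift c q k l = 0 := by
  simp only [skewLift, of_apply, Finset.sum_add_distrib, ← Finset.sum_mul, ← Complex.ofReal_sum,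
    ← Finset.sum_div, Finset.sum_sub_distrib, hrow k, hcol k]
  simp

theorem subset_tangentMap_one_add_smul_allOnes_image [Fintype ι] [DecidableEq ι] {c : ℂ}
    (hre : c.re ≠ 0) (him : c.im ≠ 0) (hu : (1 + c • allOnes ι) * (1 + c • allOnes ι)ᴴ = 1) :
    {q | (∀ k, ∑ l, q k l = 0) ∧ (∀ l, ∑ k, q k l = 0)} ⊆
      tangentMap (1 + c • allOnes ι) ''
        {v | v * (1 + c • allOnes ι)ᴴ + (1 + c • allOnes ι) * vᴴ = 0} := by
  rintro q ⟨hrow, hcol⟩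
  have hw := conjTranspose_skewLift c q
  have hwu : skewLift c q * (1 + c • allOnes ι) = skewLift c q := by
    rw [Matrix.mul_add, Matrix.mul_one, Matrix.mul_smul,
      mul_allOnes_eq_zero (sum_skewLift_row hrow hcol c), smul_zero, add_zero]
  refine ⟨_, tangent_mul_of_conjTranspose_eq_neg hu hw, ?_⟩
  ext k l
  rw [hwu, tangentMap_one_add_smul_allOnes c hw, of_apply, two_mul_re_skewLift_mul_conj hre him]

end Birkhoff

open Birkhoff

lemma Complex.im_ne_zero_of_norm_eq_one {θ : ℂ} (hθ : ‖θ‖ = 1) (h1 : θ ≠ 1) (h2 : θ ≠ -1) :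
    θ.im ≠ 0 := by
  intro him
  have hθr : θ = θ.re := Complex.ext rfl (by simp [him])
  rw [hθr, Complex.norm_real, Real.norm_eq_abs, abs_eq zero_le_one] at hθ
  rcases hθ with h | h
  · exact h1 (by rw [hθr, h, Complex.ofReal_one])
  · exact h2 (by rw [hθr, h, Complex.ofReal_neg, Complex.ofReal_one])

lemma Complex.re_ne_one_of_norm_eq_one {θ : ℂ} (hθ : ‖θ‖ = 1) (h1 : θ ≠ 1) (h2 : θ ≠ -1) :
    θ.re ≠ 1 := by
  have := Complex.abs_re_lt_norm.mpr (Complex.im_ne_zero_of_norm_eq_one hθ h1 h2)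
  rw [hθ] at this
  exact (abs_lt.mp this).2.ne

lemma Complex.add_conj_add_mul_conj_div_natCast_eq_zero {θ : ℂ} (hθ : ‖θ‖ = 1) {n : ℕ}
    (hn : n ≠ 0) :
    (θ - 1) / n + conj ((θ - 1) / n) + n * ((θ - 1) / n * conj ((θ - 1) / n)) = 0 := by
  have hθθ : θ * conj θ = 1 := by
    rw [Complex.mul_conj, Complex.normSq_eq_norm_sq, hθ]; norm_num
  have hn' : (n : ℂ) ≠ 0 := Nat.cast_ne_zero.mpr hn
  simp only [map_div₀, map_sub, map_one, Complex.conj_natCast]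
  field_simp
  linear_combination hθθ

/-- the map `μ : (u k l) ↦ (|u k l|²)` is a submersion at the unitary matrix
`u k l = δ_{kl} + (θ - 1)/n` (where `|θ| = 1`, `θ ≠ ±1`): the tangent map
`v ↦ ((k,l) ↦ 2 Re (v k l * conj (u k l)))`, restricted to the tangent space
`{v | v * uᴴ + u * vᴴ = 0}` at `u` to the unitary group, has image equal to the whole
tangent space of the Birkhoff polytope, namely the space of real matrices all of whose row
sums and column sums vanish. -/
theorem stmt19 (n : ℕ) (hn : 1 ≤ n) (θ : ℂ)
    (hθ : ‖θ‖ = 1) (hθ1 : θ ≠ 1) (hθ2 : θ ≠ -1)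
    (u : Matrix (Fin n) (Fin n) ℂ)
    (hu : ∀ k l, u k l = (if k = l then 1 else 0) + (θ - 1) / (n : ℂ)) :
    (fun v : Matrix (Fin n) (Fin n) ℂ =>
        (Matrix.of fun k l => 2 * (v k l * (starRingEnd ℂ) (u k l)).re :
          Matrix (Fin n) (Fin n) ℝ)) ''
      {v : Matrix (Fin n) (Fin n) ℂ | v * uᴴ + u * vᴴ = 0} =
    {q : Matrix (Fin n) (Fin n) ℝ | (∀ k, ∑ l, q k l = 0) ∧ (∀ l, ∑ k, q k l = 0)} := by
  have hn0 : n ≠ 0 := Nat.one_le_iff_ne_zero.mp hn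
  set c : ℂ := (θ - 1) / n with hc
  have hu_eq : u = 1 + c • allOnes (Fin n) := by
    ext k l; simp [hu, allOnes, one_apply]
  have hunitary : (1 + c • allOnes (Fin n)) * (1 + c • allOnes (Fin n))ᴴ = 1 := by
    rw [one_add_smul_allOnes_mul_conjTranspose, Fintype.card_fin, hc,
      Complex.add_conj_add_mul_conj_div_natCast_eq_zero hθ hn0, zero_smul, add_zero]
  have hre : c.re ≠ 0 := by
    rw [hc, Complex.div_natCast_re, Complex.sub_re, Complex.one_re]
    exact div_ne_zero (sub_ne_zero.mpr (Complex.re_ne_one_of_norm_eq_one hθ hθ1 hθ2))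
      (Nat.cast_ne_zero.mpr hn0)
  have him : c.im ≠ 0 := by
    rw [hc, Complex.div_natCast_im, Complex.sub_im, Complex.one_im, sub_zero]
    exact div_ne_zero (Complex.im_ne_zero_of_norm_eq_one hθ hθ1 hθ2) (Nat.cast_ne_zero.mpr hn0)
  subst hu_eq
  exact (tangentMap_image_subset hunitary).antisymm
    (subset_tangentMap_one_add_smul_allOnes_image hre him hunitary)
end
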